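/- mfw({A_{k,t}, B_{k,t}}) = 2t-1 for k ≥ 2, t ≥ 1: there exists r such that every permutation matrix (r, 2t-1)-formation contains A_{k,t} or B_{k,t}, and for every r there exists a permutation matrix (r, 2t-2)-formation avoiding both. -/

import Mathlib

def hcat (r : ℕ) (B : ℕ → ℕ → ℕ → Prop) : ℕ → ℕ → Prop :=
  fun i j => B (j / r) i (j % r)

def idMat (r : ℕ) : ℕ → ℕ → Prop := fun i j => j < r ∧ i = j

def revMat (r : ℕ) : ℕ → ℕ → Prop := fun i j => j < r ∧ i = r - 1 - j

def IsPermMat (r : ℕ) (M : ℕ → ℕ → Prop) : Prop :=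
  ∃ π : ℕ → ℕ, Set.BijOn π (Set.Iio r) (Set.Iio r) ∧ ∀ i j, M i j ↔ (j < r ∧ i = π j)

def PContains (A : ℕ → ℕ → Prop) (nA mA : ℕ) (P : ℕ → ℕ → Prop) (p q : ℕ) : Prop :=
  ∃ ri ci : ℕ → ℕ, StrictMono ri ∧ StrictMono ci ∧
    (∀ a < p, ri a < nA) ∧ (∀ b < q, ci b < mA) ∧
    ∀ a b, a < p → b < q → P a b → A (ri a) (ci b)

/-- `A_{k,t}`: horizontal concatenation of `t` copies of the `k × k` identity matrix. -/
def Amat (k : ℕ) : ℕ → ℕ → Prop := hcat k (fun _ => idMat k)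

/-- `B_{k,t}`: the horizontal reflection of `A_{k,t}`. -/
def Bmat (k : ℕ) : ℕ → ℕ → Prop := hcat k (fun _ => revMat k)

/-!
For the upper bound, iterating the Erdős–Szekeres theorem once per block gives `k` rows on
which every block of a formation with `2t - 1` blocks is increasing or decreasing, provided
`r ≥ k ^ 2 ^ (2t - 1)`. By pigeonhole, `t` blocks are of the same kind, and these contain
`A_{k,t}` or `B_{k,t}` on those rows.

For the lower bound, take `t - 1` identity blocks alternating with `t - 1` reversal blocks.
Both `A_{k,t}` and `B_{k,t}` contain, in their first and last rows, `2t` ones at increasing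
columns whose rows alternate. In two rows of the alternating formation, the row changes at
most `2t - 2` times along the ones: inside a block the two ones come in an order fixed by the
parity of the block, so consecutive blocks share the row at which they meet.
-/

open Finset

lemma exists_strictMono_eqOn {f : ℕ → ℕ} {n : ℕ} (hf : StrictMonoOn f (Set.Iio n)) :
    ∃ g : ℕ → ℕ, StrictMono g ∧ Set.EqOn g f (Set.Iio n) := by
  refine ⟨fun a => if a < n then f a else f (n - 1) + a, strictMono_nat_of_lt_succ fun a => ?_,
    fun a ha => if_pos ha⟩
  split_ifs with h₁ h₂ h₂
  · exact hf h₁ h₂ a.lt_succ_self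
  · obtain rfl : a = n - 1 := by omega
    omega
  · omega
  · omega

theorem PContains.of_strictMonoOn {A P : ℕ → ℕ → Prop} {nA mA p q : ℕ} {ri ci : ℕ → ℕ}
    (hri : StrictMonoOn ri (Set.Iio p)) (hci : StrictMonoOn ci (Set.Iio q))
    (hri_lt : ∀ a < p, ri a < nA) (hci_lt : ∀ b < q, ci b < mA)
    (hA : ∀ a b, a < p → b < q → P a b → A (ri a) (ci b)) : PContains A nA mA P p q := by
  obtain ⟨ri', hri', hr⟩ := exists_strictMono_eqOn hri
  obtain ⟨ci', hci', hc⟩ := exists_strictMono_eqOn hci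
  refine ⟨ri', ci', hri', hci', fun a ha => ?_, fun b hb => ?_, fun a b ha hb hP => ?_⟩
  · rw [hr ha]
    exact hri_lt a ha
  · rw [hc hb]
    exact hci_lt b hb
  · rw [hr ha, hc hb]
    exact hA a b ha hb hP

theorem PContains.trans {A P Q : ℕ → ℕ → Prop} {nA mA p q p' q' : ℕ}
    (hAP : PContains A nA mA P p q) (hPQ : PContains P p q Q p' q') :
    PContains A nA mA Q p' q' := by
  obtain ⟨ri, ci, hri, hci, hri_lt, hci_lt, hA⟩ := hAP
  obtain ⟨ri', ci', hri', hci', hri'_lt, hci'_lt, hP⟩ := hPQ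
  exact ⟨ri ∘ ri', ci ∘ ci', hri.comp hri', hci.comp hci', fun a ha => hri_lt _ (hri'_lt a ha),
    fun b hb => hci_lt _ (hci'_lt b hb),
    fun a b ha hb hQ => hA _ _ (hri'_lt a ha) (hci'_lt b hb) (hP a b ha hb hQ)⟩

lemma hcat_mul_add {r b i j : ℕ} {B : ℕ → ℕ → ℕ → Prop} (hj : j < r) :
    hcat r B i (b * r + j) ↔ B b i j := by
  have hr : 0 < r := by omega
  unfold hcat
  rw [Nat.add_comm, Nat.add_mul_div_right _ _ hr, Nat.add_mul_mod_self_right,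
    Nat.div_eq_of_lt hj, Nat.mod_eq_of_lt hj, Nat.zero_add]

lemma mul_add_lt_mul {r b b' x : ℕ} (hx : x < r) (hb : b < b') : b * r + x < b' * r :=
  calc b * r + x < (b + 1) * r := by rw [Nat.add_one_mul]; omega
    _ ≤ b' * r := Nat.mul_le_mul_right r hb

theorem hcat_contains_hcat {r s k t : ℕ} {B : ℕ → ℕ → ℕ → Prop} {Q : ℕ → ℕ → Prop}
    {ρ β : ℕ → ℕ} {γ : ℕ → ℕ → ℕ}
    (hρ : StrictMonoOn ρ (Set.Iio k)) (hρ_lt : ∀ a < k, ρ a < r)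
    (hβ : StrictMonoOn β (Set.Iio t)) (hβ_lt : ∀ j < t, β j < s)
    (hγ : ∀ j < t, StrictMonoOn (γ j) (Set.Iio k)) (hγ_lt : ∀ j < t, ∀ b < k, γ j b < r)
    (hQ : ∀ j < t, ∀ a b, a < k → b < k → Q a b → B (β j) (ρ a) (γ j b)) :
    PContains (hcat r B) r (s * r) (hcat k fun _ => Q) k (t * k) := by
  have hblock : ∀ c < t * k, c / k < t ∧ c % k < k := fun c hc =>
    ⟨Nat.div_lt_of_lt_mul (by rwa [Nat.mul_comm] at hc),
      Nat.mod_lt _ (Nat.pos_of_ne_zero fun h => by simp [h] at hc)⟩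
  refine PContains.of_strictMonoOn (ci := fun c => β (c / k) * r + γ (c / k) (c % k)) hρ ?_ hρ_lt
    ?_ fun a c ha hc hQac => (hcat_mul_add (hγ_lt _ (hblock c hc).1 _ (hblock c hc).2)).2
      (hQ _ (hblock c hc).1 a _ ha (hblock c hc).2 hQac)
  · intro c hc c' hc' hcc'
    obtain ⟨hq, hm⟩ := hblock c hc
    obtain ⟨hq', hm'⟩ := hblock c' hc'
    rcases (Nat.div_le_div_right hcc'.le : c / k ≤ c' / k).eq_or_lt with heq | hlt
    · have hmod : c % k < c' % k := by
        have := Nat.div_add_mod c k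
        have := Nat.div_add_mod c' k
        rw [heq] at *
        omega
      dsimp only
      rw [heq]
      exact Nat.add_lt_add_left (hγ _ hq' hm hm' hmod) _
    · exact (mul_add_lt_mul (hγ_lt _ hq _ hm) (hβ hq hq' hlt)).trans_le (Nat.le_add_right _ _)
  · intro c hc
    obtain ⟨hq, hm⟩ := hblock c hc
    exact mul_add_lt_mul (hγ_lt _ hq _ hm) (hβ_lt _ hq)

section ErdosSzekeres

variable {α β : Type*} [LinearOrder α] [LinearOrder β]

theorem exists_strictMonoOn_or_strictAntiOn_of_mul_lt_card {f : α → β} (a b : ℕ) {s : Finset α}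
    (hf : Set.InjOn f s) (hs : a * b < #s) :
    (∃ u ⊆ s, a < #u ∧ StrictMonoOn f u) ∨ (∃ u ⊆ s, b < #u ∧ StrictAntiOn f u) := by
  induction a generalizing s with
  | zero =>
    obtain ⟨x, hx⟩ := card_pos.1 (by omega : 0 < #s)
    exact .inl ⟨{x}, singleton_subset_iff.2 hx, by simp, by simp⟩
  | succ a ih =>
    -- the elements of `s` that start no increasing pair form a decreasing sequence
    set E := s.filter fun x => ∀ y ∈ s, x < y → f y < f x
    by_cases hE : b < #E
    · exact .inr ⟨E, filter_subset _ _, hE, fun x hx y hy hxy => (mem_filter.1 hx).2 y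
        (mem_filter.1 hy).1 hxy⟩
    have hsE : a * b < #(s \ E) := by
      rw [card_sdiff_of_subset (show E ⊆ s from filter_subset _ _)]
      have := card_le_card (show E ⊆ s from filter_subset _ _)
      rw [Nat.succ_mul] at hs
      omega
    rcases ih (hf.mono (coe_subset.2 sdiff_subset)) hsE with
      ⟨u, hus, hu, hmono⟩ | ⟨u, hus, hu, hanti⟩
    · have hne : u.Nonempty := card_pos.1 (by omega)
      obtain ⟨hxs, hxE⟩ := mem_sdiff.1 (hus (u.max'_mem hne))
      obtain ⟨y, hys, hxy, hfxy⟩ : ∃ y ∈ s, u.max' hne < y ∧ f (u.max' hne) ≤ f y := by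
        simpa [E, hxs] using hxE
      have hfxy : f (u.max' hne) < f y := hfxy.lt_of_ne fun h => hxy.ne (hf hxs hys h)
      have hyu : y ∉ u := fun hy => (u.le_max' y hy).not_gt hxy
      refine .inl ⟨insert y u, insert_subset hys (hus.trans sdiff_subset), by
        rw [card_insert_of_notMem hyu]; omega, ?_⟩
      rw [coe_insert,
        strictMonoOn_insert_iff_of_forall_le fun x hx => (u.le_max' x hx).trans hxy.le]
      exact ⟨fun x hx _ => (hmono.monotoneOn hx (u.max'_mem hne) (u.le_max' x hx)).trans_lt hfxy,
        hmono⟩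
    · exact .inr ⟨u, hus.trans sdiff_subset, hu, hanti⟩

theorem exists_subset_forall_strictMonoOn_or_strictAntiOn {k : ℕ} (hk : 0 < k) (g : ℕ → α → β)
    (N : ℕ) {s : Finset α} (hg : ∀ j < N, Set.InjOn (g j) s) (hs : k ^ 2 ^ N ≤ #s) :
    ∃ u ⊆ s, k ≤ #u ∧ ∀ j < N, StrictMonoOn (g j) u ∨ StrictAntiOn (g j) u := by
  induction N generalizing s with
  | zero => exact ⟨s, subset_rfl, by simpa using hs, fun j hj => absurd hj j.not_lt_zero⟩
  | succ N ih =>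
    set m := k ^ 2 ^ N
    have hm : 0 < m := Nat.pow_pos hk
    have hs' : (m - 1) * (m - 1) < #s := by
      refine (Nat.mul_self_lt_mul_self (by omega : m - 1 < m)).trans_le ?_
      rwa [pow_succ, pow_mul, sq] at hs
    obtain ⟨u, hus, hu, hgN⟩ : ∃ u ⊆ s, m - 1 < #u ∧
        (StrictMonoOn (g N) u ∨ StrictAntiOn (g N) u) := by
      rcases exists_strictMonoOn_or_strictAntiOn_of_mul_lt_card _ _ (hg N N.lt_succ_self) hs' with
        ⟨u, hus, hu, h⟩ | ⟨u, hus, hu, h⟩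
      exacts [⟨u, hus, hu, .inl h⟩, ⟨u, hus, hu, .inr h⟩]
    obtain ⟨v, hvu, hv, hgv⟩ := ih (fun j hj => (hg j (by omega)).mono (coe_subset.2 hus))
      (by omega)
    refine ⟨v, hvu.trans hus, hv, fun j hj => ?_⟩
    rcases (Nat.lt_succ_iff_lt_or_eq.1 hj) with hj | rfl
    · exact hgv j hj
    · exact hgN.imp (·.mono (coe_subset.2 hvu)) (·.mono (coe_subset.2 hvu))

end ErdosSzekeres

lemma Finset.exists_strictMonoOn_mapsTo (s : Finset ℕ) {n : ℕ} (hn : n ≤ #s) :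
    ∃ e : ℕ → ℕ, StrictMonoOn e (Set.Iio n) ∧ Set.MapsTo e (Set.Iio n) s := by
  obtain ⟨u, hus, hu⟩ := exists_subset_card_eq hn
  refine ⟨fun a => if h : a < n then u.orderEmbOfFin hu ⟨a, h⟩ else 0, fun a ha b hb hab => ?_,
    fun a ha => ?_⟩
  · simp only [dif_pos (Set.mem_Iio.1 ha), dif_pos (Set.mem_Iio.1 hb)]
    exact (u.orderEmbOfFin hu).strictMono (Fin.mk_lt_mk.2 hab)
  · simp only [dif_pos (Set.mem_Iio.1 ha)]
    exact hus (u.orderEmbOfFin_mem hu _)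

lemma IsPermMat.exists_col {r : ℕ} {M : ℕ → ℕ → Prop} (hM : IsPermMat r M) :
    ∃ g : ℕ → ℕ, Set.InjOn g (Set.Iio r) ∧ ∀ i < r, g i < r ∧ M i (g i) := by
  obtain ⟨π, hπ, hM⟩ := hM
  have hinv := hπ.invOn_invFunOn
  have hbij := hπ.symm hinv.symm
  exact ⟨_, hbij.injOn, fun i hi => ⟨hbij.mapsTo hi, (hM _ _).2 ⟨hbij.mapsTo hi, (hinv.2 hi).symm⟩⟩⟩

lemma hcat_contains_Amat {r s k t : ℕ} {B : ℕ → ℕ → ℕ → Prop} {ρ β : ℕ → ℕ} {g : ℕ → ℕ → ℕ}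
    (hρ : StrictMonoOn ρ (Set.Iio k)) (hρ_lt : ∀ a < k, ρ a < r)
    (hβ : StrictMonoOn β (Set.Iio t)) (hβ_lt : ∀ j < t, β j < s)
    (hg : ∀ j < t, ∀ a < k, g j (ρ a) < r ∧ B (β j) (ρ a) (g j (ρ a)))
    (hmono : ∀ j < t, StrictMonoOn (g j ∘ ρ) (Set.Iio k)) :
    PContains (hcat r B) r (s * r) (Amat k) k (t * k) := by
  refine hcat_contains_hcat (γ := fun j => g j ∘ ρ) hρ hρ_lt hβ hβ_lt hmono
    (fun j hj b hb => (hg j hj b hb).1) ?_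
  rintro j hj a b ha - ⟨-, rfl⟩
  exact (hg j hj a ha).2

lemma hcat_contains_Bmat {r s k t : ℕ} {B : ℕ → ℕ → ℕ → Prop} {ρ β : ℕ → ℕ} {g : ℕ → ℕ → ℕ}
    (hρ : StrictMonoOn ρ (Set.Iio k)) (hρ_lt : ∀ a < k, ρ a < r)
    (hβ : StrictMonoOn β (Set.Iio t)) (hβ_lt : ∀ j < t, β j < s)
    (hg : ∀ j < t, ∀ a < k, g j (ρ a) < r ∧ B (β j) (ρ a) (g j (ρ a)))
    (hanti : ∀ j < t, StrictAntiOn (g j ∘ ρ) (Set.Iio k)) :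
    PContains (hcat r B) r (s * r) (Bmat k) k (t * k) := by
  have hrev : StrictAntiOn (fun b => k - 1 - b) (Set.Iio k) := fun a ha b hb hab => by
    simp only [Set.mem_Iio] at ha hb
    show k - 1 - b < k - 1 - a
    omega
  have hrev_maps : Set.MapsTo (fun b => k - 1 - b) (Set.Iio k) (Set.Iio k) :=
    fun a (ha : a < k) => show k - 1 - a < k by omega
  refine hcat_contains_hcat (γ := fun j b => g j (ρ (k - 1 - b))) hρ hρ_lt hβ hβ_lt
    (fun j hj => (hanti j hj).comp hrev hrev_maps) (fun j hj b hb => (hg j hj _ (by omega)).1) ?_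
  rintro j hj a b ha - ⟨-, rfl⟩
  exact (hg j hj _ ha).2

theorem formation_contains_Amat_or_Bmat {r s k t : ℕ} (hk : 0 < k) (hst : 2 * t ≤ s + 1)
    (hr : k ^ 2 ^ s ≤ r) {B : ℕ → ℕ → ℕ → Prop} (hB : ∀ b < s, IsPermMat r (B b)) :
    PContains (hcat r B) r (s * r) (Amat k) k (t * k) ∨
      PContains (hcat r B) r (s * r) (Bmat k) k (t * k) := by
  classical
  have : ∀ b, ∃ g : ℕ → ℕ, b < s → Set.InjOn g (Set.Iio r) ∧ ∀ i < r, g i < r ∧ B b i (g i) :=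
    fun b => if hb : b < s then (hB b hb).exists_col.imp fun _ h _ => h
      else ⟨id, fun h => absurd h hb⟩
  choose G hG using this
  obtain ⟨T, hTr, hkT, hT⟩ := exists_subset_forall_strictMonoOn_or_strictAntiOn hk G s
    (s := range r) (fun b hb => by simpa using (hG b hb).1) (by simpa using hr)
  obtain ⟨ρ, hρ, hρT⟩ := T.exists_strictMonoOn_mapsTo hkT
  have hρ_lt (a : ℕ) (ha : a < k) : ρ a < r := mem_range.1 (hTr (hρT ha))
  have hcol (b : ℕ) (hb : b < s) (a : ℕ) (ha : a < k) : G b (ρ a) < r ∧ B b (ρ a) (G b (ρ a)) :=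
    (hG b hb).2 _ (hρ_lt a ha)
  have hcard := card_filter_add_card_filter_not (s := range s) fun b => StrictMonoOn (G b) T
  rw [card_range] at hcard
  by_cases hmono : t ≤ #((range s).filter fun b => StrictMonoOn (G b) T)
  · obtain ⟨β, hβ, hβI⟩ := exists_strictMonoOn_mapsTo _ hmono
    have hβ_lt (j : ℕ) (hj : j < t) : β j < s := mem_range.1 (mem_filter.1 (hβI hj)).1
    exact .inl (hcat_contains_Amat hρ hρ_lt hβ hβ_lt (fun j hj => hcol _ (hβ_lt j hj))
      fun j hj => (mem_filter.1 (hβI hj)).2.comp hρ hρT)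
  · obtain ⟨β, hβ, hβI⟩ := exists_strictMonoOn_mapsTo
      ((range s).filter fun b => ¬ StrictMonoOn (G b) T) (n := t) (by omega)
    have hβ_lt (j : ℕ) (hj : j < t) : β j < s := mem_range.1 (mem_filter.1 (hβI hj)).1
    exact .inr (hcat_contains_Bmat hρ hρ_lt hβ hβ_lt (fun j hj => hcol _ (hβ_lt j hj))
      fun j hj => ((hT _ (hβ_lt j hj)).resolve_left (mem_filter.1 (hβI hj)).2).comp_strictMonoOn
        hρ hρT)

lemma isPermMat_idMat (r : ℕ) : IsPermMat r (idMat r) :=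
  ⟨id, Set.bijOn_id _, fun _ _ => Iff.rfl⟩

lemma isPermMat_revMat (r : ℕ) : IsPermMat r (revMat r) := by
  have hinv : Set.InvOn (fun j => r - 1 - j) (fun j => r - 1 - j) (Set.Iio r) (Set.Iio r) :=
    ⟨fun j (hj : j < r) => show r - 1 - (r - 1 - j) = j by omega,
      fun j (hj : j < r) => show r - 1 - (r - 1 - j) = j by omega⟩
  have hmaps : Set.MapsTo (fun j => r - 1 - j) (Set.Iio r) (Set.Iio r) :=
    fun j (hj : j < r) => show r - 1 - j < r by omega
  exact ⟨_, hinv.bijOn hmaps hmaps, fun _ _ => Iff.rfl⟩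

def alternatingFormation (r : ℕ) : ℕ → ℕ → ℕ → Prop :=
  fun b => if b % 2 = 0 then idMat r else revMat r

lemma isPermMat_alternatingFormation (r b : ℕ) : IsPermMat r (alternatingFormation r b) := by
  unfold alternatingFormation
  split_ifs
  exacts [isPermMat_idMat r, isPermMat_revMat r]

/-- Inside block `c / r` of `alternatingFormation r`, the ones in rows `< m` all precede or all
follow those in rows `≥ m`, according to the parity of the block; `crossingLevel r m i c` is
`c / r` on the earlier group and `c / r + 1` on the later one. -/
def crossingLevel (r m i c : ℕ) : ℕ := c / r + (c / r + if m ≤ i then 1 else 0) % 2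

lemma crossingLevel_mod_two (r m i c : ℕ) :
    crossingLevel r m i c % 2 = if m ≤ i then 1 else 0 := by
  unfold crossingLevel
  split_ifs <;> omega

lemma crossingLevel_le (r m i c : ℕ) : crossingLevel r m i c ≤ c / r + 1 := by
  unfold crossingLevel
  omega

lemma crossingLevel_mono {r m i i' c c' : ℕ} (h : hcat r (alternatingFormation r) i c)
    (h' : hcat r (alternatingFormation r) i' c') (hc : c < c') :
    crossingLevel r m i c ≤ crossingLevel r m i' c' := by
  unfold hcat alternatingFormation at h h'
  rcases (Nat.div_le_div_right hc.le : c / r ≤ c' / r).eq_or_lt with heq | hlt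
  · have hmod : c % r < c' % r := by
      have := Nat.div_add_mod c r
      have := Nat.div_add_mod c' r
      rw [heq] at *
      omega
    unfold crossingLevel
    rw [heq] at h ⊢
    split_ifs at h h' <;> simp only [idMat, revMat] at h h' <;> split_ifs <;> omega
  · have := crossingLevel_le r m i c
    unfold crossingLevel at this ⊢
    omega

lemma le_crossingLevel_of_alternating {r m n : ℕ} {ρ c : ℕ → ℕ}
    (hone : ∀ j ≤ n, hcat r (alternatingFormation r) (ρ j) (c j))
    (hc : ∀ j < n, c j < c (j + 1)) (hside : ∀ j < n, (m ≤ ρ (j + 1) ↔ ¬ m ≤ ρ j)) :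
    n ≤ crossingLevel r m (ρ n) (c n) := by
  induction n with
  | zero => exact Nat.zero_le _
  | succ n ih =>
    have hle := crossingLevel_mono (m := m) (hone n (by omega)) (hone (n + 1) le_rfl)
      (hc n n.lt_succ_self)
    have hpar : crossingLevel r m (ρ n) (c n) % 2 ≠
        crossingLevel r m (ρ (n + 1)) (c (n + 1)) % 2 := by
      have := hside n n.lt_succ_self
      rw [crossingLevel_mod_two, crossingLevel_mod_two]
      split_ifs <;> simp_all
    have := ih (fun j hj => hone j (by omega)) (fun j hj => hc j (by omega))
      (fun j hj => hside j (by omega))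
    omega

def zigzag (i : ℕ) : ℕ → ℕ → Prop := fun a b => a = (b + i) % 2

theorem alternatingFormation_not_contains_zigzag {r s t : ℕ} (i : ℕ) (hst : s + 2 ≤ 2 * t) :
    ¬ PContains (hcat r (alternatingFormation r)) r (s * r) (zigzag i) 2 (2 * t) := by
  rintro ⟨ri, ci, hri, hci, -, hci_lt, hone⟩
  have hlevel := le_crossingLevel_of_alternating (m := ri 1) (n := 2 * t - 1)
    (ρ := fun j => ri ((j + i) % 2)) (c := ci)
    (fun j hj => hone _ j (Nat.mod_lt _ two_pos) (by omega) rfl) (fun j _ => hci j.lt_succ_self)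
    (fun j _ => by simp only [hri.le_iff_le]; omega)
  have hdiv : ci (2 * t - 1) / r < s :=
    Nat.div_lt_of_lt_mul ((hci_lt (2 * t - 1) (by omega)).trans_eq (Nat.mul_comm s r))
  have := crossingLevel_le r (ri 1) (ri ((2 * t - 1 + i) % 2)) (ci (2 * t - 1))
  omega

theorem hcat_contains_zigzag {k t i : ℕ} {Q : ℕ → ℕ → Prop} (hk : 2 ≤ k)
    (hQ : ∀ b < 2, Q ((b + i) % 2 * (k - 1)) (b * (k - 1))) :
    PContains (hcat k fun _ => Q) k (t * k) (zigzag i) 2 (2 * t) := by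
  have hcol_lt (b : ℕ) : b % 2 * (k - 1) < k := by
    rcases Nat.mod_two_eq_zero_or_one b with h | h <;> rw [h] <;> omega
  refine ⟨fun a => a * (k - 1), fun b => b / 2 * k + b % 2 * (k - 1),
    fun a b hab => Nat.mul_lt_mul_of_pos_right hab (by omega),
    strictMono_nat_of_lt_succ fun b => ?_, fun a ha => ?_, fun b hb => ?_, fun a b _ _ hab => ?_⟩
  · rcases Nat.mod_two_eq_zero_or_one b with h | h
    · rw [show (b + 1) / 2 = b / 2 by omega, show (b + 1) % 2 = 1 by omega, h]
      omega
    · rw [show (b + 1) / 2 = b / 2 + 1 by omega, show (b + 1) % 2 = 0 by omega, h,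
        Nat.add_one_mul (b / 2)]
      omega
  · show a * (k - 1) < k
    interval_cases a <;> omega
  · exact mul_add_lt_mul (hcol_lt b) (by omega)
  · rw [hcat_mul_add (hcol_lt b), hab]
    convert hQ (b % 2) (Nat.mod_lt _ two_pos) using 2
    omega

lemma Amat_contains_zigzag {k t : ℕ} (hk : 2 ≤ k) :
    PContains (Amat k) k (t * k) (zigzag 0) 2 (2 * t) :=
  hcat_contains_zigzag hk fun b hb => by
    interval_cases b <;> simp [idMat] <;> omega

lemma Bmat_contains_zigzag {k t : ℕ} (hk : 2 ≤ k) :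
    PContains (Bmat k) k (t * k) (zigzag 1) 2 (2 * t) :=
  hcat_contains_zigzag hk fun b hb => by
    interval_cases b <;> simp [revMat] <;> omega

/-- `mfw({A_{k,t}, B_{k,t}}) = 2t-1` for `k ≥ 2`, `t ≥ 1`: there exists `r` such that
every permutation matrix `(r, 2t-1)`-formation contains `A_{k,t}` or `B_{k,t}`, and for
every `r` there is a permutation matrix `(r, 2t-2)`-formation avoiding both. -/
theorem mfw_A_B (k t : ℕ) (hk : 2 ≤ k) (ht : 1 ≤ t) :
    (∃ r, ∀ B : ℕ → ℕ → ℕ → Prop, (∀ b < 2 * t - 1, IsPermMat r (B b)) →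
      PContains (hcat r B) r ((2 * t - 1) * r) (Amat k) k (t * k) ∨
      PContains (hcat r B) r ((2 * t - 1) * r) (Bmat k) k (t * k)) ∧
    (∀ r, ∃ B : ℕ → ℕ → ℕ → Prop, (∀ b < 2 * t - 2, IsPermMat r (B b)) ∧
      ¬ PContains (hcat r B) r ((2 * t - 2) * r) (Amat k) k (t * k) ∧
      ¬ PContains (hcat r B) r ((2 * t - 2) * r) (Bmat k) k (t * k)) := by
  refine ⟨⟨k ^ 2 ^ (2 * t - 1), fun B hB => formation_contains_Amat_or_Bmat (by omega) (by omega)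
    le_rfl hB⟩, fun r => ⟨alternatingFormation r, fun b _ => isPermMat_alternatingFormation r b,
    fun h => ?_, fun h => ?_⟩⟩
  · exact alternatingFormation_not_contains_zigzag 0 (by omega) (h.trans (Amat_contains_zigzag hk))
  · exact alternatingFormation_not_contains_zigzag 1 (by omega) (h.trans (Bmat_contains_zigzag hk))
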